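/- For every θ ∈ (0,∞)^d and every s ∈ ℂ with Re(s) > d, Σ_{v ∈ Z^d_+ \ {0}} 2^{d(v)-1} (θ·v)^{-s} = ζ(s) · Σ_{v ∈ P_{d+}} 2^{d(v)-1} (θ·v)^{-s}, both series converging absolutely. -/

import Mathlib

/-!
Every nonzero `v ∈ ℕ^d` is uniquely `k • w` with `k = gcd v ≥ 1` and `w` primitive, and the
summand `2^{d(v)-1} (θ · v)^{-s}` is homogeneous of degree `-s` under `v ↦ k • v` (dilation does
not change the support of `v`). Hence the series over nonzero vectors is the Cauchy product of
`∑ k^{-s} = ζ(s)` with the series over primitive vectors, the rearrangement being justified by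
absolute convergence. That in turn follows for `Re s > d` from `θ · v ≥ m ∑ vᵢ` with
`m = minᵢ θᵢ > 0`, which dominates `(θ · v)^{-Re s}` by a multiple of `∏ᵢ (vᵢ + 1)^{-Re s / d}`, a
product of `d` convergent `p`-series.
-/

open Complex Finset

noncomputable section

/-- Number of nonzero coordinates of a vector `v ∈ ℤ^d_+`. -/
def nnz {d : ℕ} (v : Fin d → ℕ) : ℕ := (Finset.univ.filter fun i => v i ≠ 0).card

/-- Standard scalar product `θ · v`. -/
def dotR {d : ℕ} (θ : Fin d → ℝ) (v : Fin d → ℕ) : ℝ := ∑ i, θ i * (v i : ℝ)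

/-- The set `P_{d+}` of primitive vectors of `ℤ^d_+ \ {0}`. -/
abbrev Prim (d : ℕ) := {v : Fin d → ℕ // v ≠ 0 ∧ Finset.univ.gcd v = 1}

variable {d : ℕ}

lemma nnz_smul {k : ℕ} (hk : k ≠ 0) (v : Fin d → ℕ) : nnz (k • v) = nnz v := by
  simp [nnz, hk]

lemma nnz_le (v : Fin d → ℕ) : nnz v ≤ d :=
  (card_filter_le _ _).trans_eq (card_fin d)

lemma dotR_smul (θ : Fin d → ℝ) (k : ℕ) (v : Fin d → ℕ) :
    dotR θ (k • v) = k * dotR θ v := by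
  simp only [dotR, mul_sum, Pi.smul_apply, smul_eq_mul, Nat.cast_mul]
  exact sum_congr rfl fun i _ => by ring

lemma dotR_nonneg {θ : Fin d → ℝ} (hθ : ∀ i, 0 ≤ θ i) (v : Fin d → ℕ) : 0 ≤ dotR θ v :=
  sum_nonneg fun i _ => mul_nonneg (hθ i) (Nat.cast_nonneg _)

lemma mul_sum_le_dotR {θ : Fin d → ℝ} {m : ℝ} (hm : ∀ i, m ≤ θ i) (v : Fin d → ℕ) :
    m * ∑ i, (v i : ℝ) ≤ dotR θ v := by
  rw [mul_sum]
  exact sum_le_sum fun i _ => mul_le_mul_of_nonneg_right (hm i) (Nat.cast_nonneg _)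

lemma one_le_sum_of_ne_zero {v : Fin d → ℕ} (hv : v ≠ 0) : 1 ≤ ∑ i, (v i : ℝ) := by
  obtain ⟨j, hj⟩ := Function.ne_iff.mp hv
  calc (1 : ℝ) ≤ v j := by exact_mod_cast Nat.one_le_iff_ne_zero.mpr hj
    _ ≤ ∑ i, (v i : ℝ) := single_le_sum (fun i _ => Nat.cast_nonneg (v i)) (mem_univ j)

lemma dotR_pos {θ : Fin d → ℝ} (hθ : ∀ i, 0 < θ i) {v : Fin d → ℕ} (hv : v ≠ 0) :
    0 < dotR θ v := by
  obtain ⟨j, hj⟩ := Function.ne_iff.mp hv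
  exact sum_pos' (fun i _ => mul_nonneg (hθ i).le (Nat.cast_nonneg _))
    ⟨j, mem_univ j, mul_pos (hθ j) (Nat.cast_pos.mpr (Nat.pos_of_ne_zero hj))⟩

lemma summable_prod_add_one_rpow_neg {p : ℝ} (hp : 1 < p) (n : ℕ) :
    Summable fun v : Fin n → ℕ => ∏ i, ((v i : ℝ) + 1) ^ (-p) := by
  induction n with
  | zero => exact .of_finite
  | succ n ih =>
    have h1 : Summable fun k : ℕ => ((k : ℝ) + 1) ^ (-p) := by
      simpa using (summable_nat_add_iff 1).mpr (Real.summable_nat_rpow.mpr (by linarith))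
    rw [← (Fin.consEquiv fun _ => ℕ).summable_iff]
    refine (h1.mul_of_nonneg ih (fun _ => by positivity) fun _ => by positivity).congr ?_
    rintro ⟨k, w⟩
    simp [Fin.consEquiv, Fin.prod_univ_succ]

lemma dotR_rpow_neg_le {θ : Fin d → ℝ} {m σ : ℝ} (hm : 0 < m) (hθm : ∀ i, m ≤ θ i)
    (hσ : 0 ≤ σ) (hd : d ≠ 0) {v : Fin d → ℕ} (hv : v ≠ 0) :
    dotR θ v ^ (-σ) ≤ (m / 2) ^ (-σ) * ∏ i, ((v i : ℝ) + 1) ^ (-(σ / d)) := by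
  set N := ∑ i, (v i : ℝ)
  have hN : 1 ≤ N := one_le_sum_of_ne_zero hv
  have hcoord : ∀ i, (v i : ℝ) + 1 ≤ 2 * N := fun i => by
    have := single_le_sum (f := fun j => (v j : ℝ)) (fun j _ => Nat.cast_nonneg (v j)) (mem_univ i)
    linarith
  calc dotR θ v ^ (-σ) ≤ (m * N) ^ (-σ) :=
        Real.rpow_le_rpow_of_nonpos (by positivity) (mul_sum_le_dotR hθm v) (by linarith)
    _ = (m / 2) ^ (-σ) * ∏ _i : Fin d, (2 * N) ^ (-(σ / d)) := by
        rw [prod_const, card_univ, Fintype.card_fin, ← Real.rpow_mul_natCast (by positivity),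
          neg_mul, div_mul_cancel₀ _ (by exact_mod_cast hd),
          ← Real.mul_rpow (by positivity) (by positivity)]
        congr 1; ring
    _ ≤ (m / 2) ^ (-σ) * ∏ i, ((v i : ℝ) + 1) ^ (-(σ / d)) := by
        refine mul_le_mul_of_nonneg_left (prod_le_prod (fun _ _ => by positivity) fun i _ => ?_)
          (by positivity)
        exact Real.rpow_le_rpow_of_nonpos (by positivity) (hcoord i)
          (neg_nonpos.mpr (by positivity))

lemma summable_dotR_rpow_neg (hd : d ≠ 0) {θ : Fin d → ℝ} (hθ : ∀ i, 0 < θ i) {σ : ℝ}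
    (hσ : d < σ) : Summable fun v : {v : Fin d → ℕ // v ≠ 0} => dotR θ v ^ (-σ) := by
  obtain ⟨j, -, hj⟩ := exists_min_image univ θ (univ_nonempty_iff.mpr ⟨⟨0, by omega⟩⟩)
  have hp : 1 < σ / d := (one_lt_div (by positivity)).mpr hσ
  exact Summable.of_nonneg_of_le (fun v => Real.rpow_nonneg (dotR_pos hθ v.2).le _)
    (fun v => dotR_rpow_neg_le (hθ j) (fun i => hj i (mem_univ i)) (by linarith) hd v.2)
    (((summable_prod_add_one_rpow_neg hp d).mul_left _).subtype _)

def seriesTerm (θ : Fin d → ℝ) (s : ℂ) (v : Fin d → ℕ) : ℂ :=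
  2 ^ (nnz v - 1) * (dotR θ v : ℂ) ^ (-s)

lemma seriesTerm_smul {θ : Fin d → ℝ} (hθ : ∀ i, 0 ≤ θ i) (s : ℂ) {k : ℕ} (hk : k ≠ 0)
    (v : Fin d → ℕ) : seriesTerm θ s (k • v) = (k : ℂ) ^ (-s) * seriesTerm θ s v := by
  rw [seriesTerm, seriesTerm, nnz_smul hk, dotR_smul, ofReal_mul,
    mul_cpow_ofReal_nonneg (Nat.cast_nonneg k) (dotR_nonneg hθ v), ofReal_natCast]
  ring

lemma norm_seriesTerm {θ : Fin d → ℝ} (hθ : ∀ i, 0 < θ i) (s : ℂ) {v : Fin d → ℕ}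
    (hv : v ≠ 0) : ‖seriesTerm θ s v‖ = 2 ^ (nnz v - 1) * dotR θ v ^ (-s.re) := by
  simp [seriesTerm, norm_cpow_eq_rpow_re_of_pos (dotR_pos hθ hv)]

lemma summable_norm_seriesTerm (hd : d ≠ 0) {θ : Fin d → ℝ} (hθ : ∀ i, 0 < θ i) {s : ℂ}
    (hs : d < s.re) : Summable fun v : {v : Fin d → ℕ // v ≠ 0} => ‖seriesTerm θ s v‖ := by
  refine .of_nonneg_of_le (fun _ => norm_nonneg _) (fun v => ?_)
    ((summable_dotR_rpow_neg hd hθ hs).mul_left (2 ^ d))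
  rw [norm_seriesTerm hθ s v.2]
  have hweight : nnz v.1 - 1 ≤ d := (nnz_le v.1).trans' (Nat.sub_le _ _)
  exact mul_le_mul_of_nonneg_right (pow_le_pow_right₀ one_le_two hweight)
    (Real.rpow_nonneg (dotR_pos hθ v.2).le _)

lemma gcd_smul (k : ℕ) (v : Fin d → ℕ) : univ.gcd (k • v) = k * univ.gcd v :=
  (gcd_mul_left (s := univ) (f := v) (a := k)).trans (by rw [normalize_eq])

lemma gcd_ne_zero_of_ne_zero {v : Fin d → ℕ} (hv : v ≠ 0) : univ.gcd v ≠ 0 := by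
  rw [Ne, Finset.gcd_eq_zero_iff]
  exact fun h => hv (funext fun i => h i (mem_univ i))

def primPart (v : Fin d → ℕ) : Fin d → ℕ := fun i => v i / univ.gcd v

lemma gcd_smul_primPart (v : Fin d → ℕ) : univ.gcd v • primPart v = v :=
  funext fun i => Nat.mul_div_cancel' (gcd_dvd (mem_univ i))

lemma primPart_ne_zero {v : Fin d → ℕ} (hv : v ≠ 0) : primPart v ≠ 0 := by
  intro h
  rw [← gcd_smul_primPart v, h, smul_zero] at hv
  exact hv rfl

lemma gcd_primPart {v : Fin d → ℕ} (hv : v ≠ 0) : univ.gcd (primPart v) = 1 := by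
  obtain ⟨i, hi⟩ := Function.ne_iff.mp hv
  exact gcd_div_eq_one (mem_univ i) hi

def smulPrimEquiv : ℕ+ × Prim d ≃ {v : Fin d → ℕ // v ≠ 0} :=
  Equiv.ofBijective (fun p => ⟨(p.1 : ℕ) • p.2.1, smul_ne_zero p.1.ne_zero p.2.2.1⟩) <| by
    constructor
    · rintro ⟨k, w, _, hw⟩ ⟨k', w', _, hw'⟩ hvec
      replace hvec : (k : ℕ) • w = (k' : ℕ) • w' := congrArg Subtype.val hvec
      have hk := congrArg univ.gcd hvec
      rw [gcd_smul, gcd_smul, hw, hw', mul_one, mul_one, PNat.coe_inj] at hk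
      subst hk
      simpa using smul_right_injective _ k.ne_zero hvec
    · rintro ⟨v, hv⟩
      exact ⟨(⟨univ.gcd v, Nat.pos_of_ne_zero (gcd_ne_zero_of_ne_zero hv)⟩,
        ⟨primPart v, primPart_ne_zero hv, gcd_primPart hv⟩), Subtype.ext (gcd_smul_primPart v)⟩

lemma riemannZeta_eq_tsum_pnat {s : ℂ} (hs : 1 < s.re) :
    riemannZeta s = ∑' k : ℕ+, ((k : ℕ) : ℂ) ^ (-s) := by
  have hs0 : s ≠ 0 := by rintro rfl; norm_num at hs
  rw [zeta_eq_tsum_one_div_nat_cpow hs,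
    tsum_pnat_eq_tsum_of_eq_zero (f := fun n : ℕ => (n : ℂ) ^ (-s)) (by simpa using hs0)]
  simp [cpow_neg]

lemma summable_norm_pnat_cpow_neg {s : ℂ} (hs : 1 < s.re) :
    Summable fun k : ℕ+ => ‖((k : ℕ) : ℂ) ^ (-s)‖ := by
  refine ((Real.summable_nat_rpow.mpr (neg_lt_neg hs)).comp_injective
    PNat.coe_injective).congr fun k => ?_
  simp [norm_natCast_cpow_of_pos k.pos]

lemma tsum_eq_riemannZeta_mul_tsum_prim {f : (Fin d → ℕ) → ℂ} {s : ℂ} (hs : 1 < s.re)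
    (hf : ∀ {k : ℕ} (v : Fin d → ℕ), k ≠ 0 → f (k • v) = (k : ℂ) ^ (-s) * f v)
    (hsum : Summable fun v : Prim d => ‖f v‖) :
    ∑' v : {v : Fin d → ℕ // v ≠ 0}, f v = riemannZeta s * ∑' v : Prim d, f v := by
  rw [riemannZeta_eq_tsum_pnat hs,
    tsum_mul_tsum_of_summable_norm (summable_norm_pnat_cpow_neg hs) hsum,
    ← smulPrimEquiv.tsum_eq]
  exact tsum_congr fun p => hf _ p.1.ne_zero

theorem stmt2 (d : ℕ) (hd : 1 ≤ d) (θ : Fin d → ℝ) (hθ : ∀ i, 0 < θ i)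
    (s : ℂ) (hs : (d : ℝ) < s.re) :
    Summable (fun v : {v : Fin d → ℕ // v ≠ 0} =>
      ‖(2 : ℂ) ^ (nnz v.1 - 1) * (dotR θ v.1 : ℂ) ^ (-s)‖) ∧
    Summable (fun v : Prim d =>
      ‖(2 : ℂ) ^ (nnz v.1 - 1) * (dotR θ v.1 : ℂ) ^ (-s)‖) ∧
    (∑' v : {v : Fin d → ℕ // v ≠ 0}, (2 : ℂ) ^ (nnz v.1 - 1) * (dotR θ v.1 : ℂ) ^ (-s)) =
      riemannZeta s *
        ∑' v : Prim d, (2 : ℂ) ^ (nnz v.1 - 1) * (dotR θ v.1 : ℂ) ^ (-s) := by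
  have hs1 : 1 < s.re := lt_of_le_of_lt (by exact_mod_cast hd) hs
  have hsum := summable_norm_seriesTerm (by omega) hθ hs
  have hsum_prim : Summable fun v : Prim d => ‖seriesTerm θ s v‖ :=
    hsum.comp_injective (i := fun v : Prim d => (⟨v.1, v.2.1⟩ : {v : Fin d → ℕ // v ≠ 0}))
      (Subtype.impEmbedding _ _ fun _ h => h.1).injective
  exact ⟨hsum, hsum_prim, tsum_eq_riemannZeta_mul_tsum_prim hs1
    (fun v hk => seriesTerm_smul (fun i => (hθ i).le) s hk v) hsum_prim⟩

end
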